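/- arXiv:2004.00275 — 4 statements merged into one kernel-verified Lean document; each statement's English description precedes it below -/
import Mathlib

section
/- Let 0 < p0 < p1 < 1 with p0 + p1 = 1, let 0 < α < 1/2, set β = α, u = ln((1−β)/α), l = ln(β/(1−α)), and assume ln((1−α)/α) > ln(p1/p0). Then there exist adjacent sequences x, x' : ℕ → {0,1} such that the SPRT stopping step τ(x) = min{ n ≥ 1 : Λ_n(x) ∉ (l, u) } is finite while τ(x') is infinite (Λ_n(x') ∈ (l, u) for all n ≥ 1). -/
/-- The SPRT log-likelihood ratio after `n` samples of the data stream `x`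
(coordinates indexed from 1), for Bernoulli parameters `p0 < p1`. -/
noncomputable def sprtLLR (p0 p1 : ℝ) (x : ℕ → ℝ) (n : ℕ) : ℝ :=
  ∑ i ∈ Finset.Icc 1 n,
    Real.log ((p1 ^ (x i) * (1 - p1) ^ (1 - x i)) / (p0 ^ (x i) * (1 - p0) ^ (1 - x i)))

/-!
When `p0 + p1 = 1`, every observed `1` adds `c = ln (p1/p0) > 0` to the log-likelihood ratio and
every `0` subtracts `c`, so `Λ_n = c · (#ones − #zeros)`, and `l = −u`. Take `m ≥ 1` with
`m c < u ≤ (m + 1) c`. The stream of `m` ones followed by `0, 1, 0, 1, …` keeps `Λ_n` in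
`[0, m c] ⊆ (l, u)` forever, while changing its `(m + 1)`-st coordinate to `1` gives
`Λ_{m+1} = (m + 1) c ≥ u`.
-/

open Real Function

section LogLikelihoodRatio

variable {p0 p1 : ℝ} {x : ℕ → ℝ} {n : ℕ}

theorem sprtLLR_zero : sprtLLR p0 p1 x 0 = 0 := by
  simp [sprtLLR]

theorem sprtLLR_succ (p0 p1 : ℝ) (x : ℕ → ℝ) (n : ℕ) :
    sprtLLR p0 p1 x (n + 1) = sprtLLR p0 p1 x n +
      log ((p1 ^ x (n + 1) * (1 - p1) ^ (1 - x (n + 1))) /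
        (p0 ^ x (n + 1) * (1 - p0) ^ (1 - x (n + 1)))) :=
  Finset.sum_Icc_succ_top (Nat.le_add_left 1 n) _

theorem sprtLLR_succ_of_eq_one (h : x (n + 1) = 1) :
    sprtLLR p0 p1 x (n + 1) = sprtLLR p0 p1 x n + log (p1 / p0) := by
  simp [sprtLLR_succ, h]

theorem sprtLLR_succ_of_eq_zero (hsum : p0 + p1 = 1) (h : x (n + 1) = 0) :
    sprtLLR p0 p1 x (n + 1) = sprtLLR p0 p1 x n - log (p1 / p0) := by
  have hq0 : 1 - p0 = p1 := by linarith
  have hq1 : 1 - p1 = p0 := by linarith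
  rw [sprtLLR_succ, h, hq0, hq1]
  simp only [sub_zero, rpow_zero, rpow_one, one_mul]
  rw [sub_eq_add_neg, ← log_inv, inv_div]

theorem sprtLLR_of_forall_eq_one (h : ∀ i, 1 ≤ i → i ≤ n → x i = 1) :
    sprtLLR p0 p1 x n = n * log (p1 / p0) := by
  induction n with
  | zero => simp [sprtLLR_zero]
  | succ n ih =>
    rw [sprtLLR_succ_of_eq_one (h (n + 1) (by omega) le_rfl),
      ih fun i hi hin => h i hi (by omega)]
    push_cast
    ring

end LogLikelihoodRatio

noncomputable def climbThenOscillate (m i : ℕ) : ℝ :=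
  if i ≤ m ∨ Even (i - m) then 1 else 0

theorem climbThenOscillate_eq_zero_or_eq_one (m i : ℕ) :
    climbThenOscillate m i = 0 ∨ climbThenOscillate m i = 1 := by
  unfold climbThenOscillate
  split_ifs <;> simp

section ClimbThenOscillate

variable {p0 p1 : ℝ} {m : ℕ}

theorem sprtLLR_climbThenOscillate_of_le {n : ℕ} (hn : n ≤ m) :
    sprtLLR p0 p1 (climbThenOscillate m) n = n * log (p1 / p0) :=
  sprtLLR_of_forall_eq_one fun _ _ hi => if_pos (Or.inl (hi.trans hn))

theorem sprtLLR_climbThenOscillate_add (hsum : p0 + p1 = 1) (k : ℕ) :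
    sprtLLR p0 p1 (climbThenOscillate m) (m + k) =
      if Even k then m * log (p1 / p0) else (m - 1) * log (p1 / p0) := by
  induction k with
  | zero => simpa using sprtLLR_climbThenOscillate_of_le le_rfl
  | succ k ih =>
    have hsub : m + k + 1 - m = k + 1 := by omega
    by_cases hk : Even k
    · have hx : climbThenOscillate m (m + k + 1) = 0 := by
        simp [climbThenOscillate, hsub, Nat.even_add_one, hk]
      rw [← add_assoc, sprtLLR_succ_of_eq_zero hsum hx, ih, if_pos hk,
        if_neg (by rwa [Nat.even_add_one, not_not])]
      ring
    · have hx : climbThenOscillate m (m + k + 1) = 1 := by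
        simp [climbThenOscillate, hsub, Nat.even_add_one, hk]
      rw [← add_assoc, sprtLLR_succ_of_eq_one hx, ih, if_neg hk,
        if_pos (Nat.even_add_one.mpr hk)]
      ring

theorem sprtLLR_climbThenOscillate_mem_Icc (hsum : p0 + p1 = 1) (hc : 0 ≤ log (p1 / p0))
    (hm : 1 ≤ m) (n : ℕ) :
    sprtLLR p0 p1 (climbThenOscillate m) n ∈ Set.Icc 0 (m * log (p1 / p0)) := by
  have hmR : (1 : ℝ) ≤ m := by exact_mod_cast hm
  rcases le_or_gt n m with hn | hn
  · have hnR : (n : ℝ) ≤ m := by exact_mod_cast hn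
    rw [sprtLLR_climbThenOscillate_of_le hn]
    exact ⟨by positivity, by gcongr⟩
  · obtain ⟨k, rfl⟩ := Nat.exists_eq_add_of_le hn.le
    rw [sprtLLR_climbThenOscillate_add hsum]
    split_ifs
    · exact ⟨by positivity, le_rfl⟩
    · exact ⟨mul_nonneg (by linarith) hc, by nlinarith⟩

theorem sprtLLR_update_climbThenOscillate :
    sprtLLR p0 p1 (update (climbThenOscillate m) (m + 1) 1) (m + 1) =
      (m + 1 : ℕ) * log (p1 / p0) := by
  refine sprtLLR_of_forall_eq_one fun i _ hi => ?_
  rcases hi.lt_or_eq with hi | rfl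
  · rw [update_of_ne (by omega)]
    exact if_pos (Or.inl (by omega))
  · exact update_self _ _ _

end ClimbThenOscillate

theorem exists_nat_mul_lt_le_succ_mul {c u : ℝ} (hc : 0 < c) (hcu : c < u) :
    ∃ m : ℕ, 1 ≤ m ∧ m * c < u ∧ u ≤ (m + 1) * c := by
  have hone : 1 < u / c := (one_lt_div hc).mpr hcu
  obtain ⟨m, hm⟩ : ∃ m : ℕ, ⌈u / c⌉₊ = m + 1 :=
    Nat.exists_eq_add_one.mpr (Nat.ceil_pos.mpr (by linarith))
  obtain ⟨hlt, hle⟩ := (Nat.ceil_eq_iff (by omega)).mp hm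
  have hm1 : 1 < m + 1 := hm ▸ Nat.lt_ceil.mpr (by exact_mod_cast hone)
  refine ⟨m, by omega, ?_, ?_⟩
  · simpa [lt_div_iff₀ hc] using hlt
  · simpa [div_le_iff₀ hc] using hle

theorem sprt_stopping_unbounded_sensitivity_general (p0 p1 α : ℝ)
    (hp0 : 0 < p0) (hp01 : p0 < p1) (hsum : p0 + p1 = 1)
    (hbig : Real.log ((1 - α) / α) > Real.log (p1 / p0)) :
    ∃ x x' : ℕ → ℝ,
      (∀ i, x i = 0 ∨ x i = 1) ∧ (∀ i, x' i = 0 ∨ x' i = 1) ∧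
      (∃ K : ℕ, ∀ n, n ≠ K → x n = x' n) ∧
      (∃ n, 1 ≤ n ∧
        sprtLLR p0 p1 x n ∉ Set.Ioo (Real.log (α / (1 - α))) (Real.log ((1 - α) / α))) ∧
      (∀ n, 1 ≤ n →
        sprtLLR p0 p1 x' n ∈ Set.Ioo (Real.log (α / (1 - α))) (Real.log ((1 - α) / α))) := by
  have hc : 0 < log (p1 / p0) := log_pos ((one_lt_div hp0).mpr hp01)
  obtain ⟨m, hm, hmu, hum⟩ := exists_nat_mul_lt_le_succ_mul hc hbig
  have hl : log (α / (1 - α)) = -log ((1 - α) / α) := by rw [← inv_div, log_inv]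
  refine ⟨update (climbThenOscillate m) (m + 1) 1, climbThenOscillate m, fun i => ?_,
    climbThenOscillate_eq_zero_or_eq_one m, ⟨m + 1, fun n hn => update_of_ne hn _ _⟩,
    ⟨m + 1, by omega, ?_⟩, fun n _ => ?_⟩
  · rcases eq_or_ne i (m + 1) with rfl | hi
    · exact Or.inr (update_self _ _ _)
    · rw [update_of_ne hi]
      exact climbThenOscillate_eq_zero_or_eq_one m i
  · rw [sprtLLR_update_climbThenOscillate]
    push_cast
    exact fun h => h.2.not_ge hum
  · obtain ⟨h0, hle⟩ := sprtLLR_climbThenOscillate_mem_Icc hsum hc.le hm n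
    rw [hl]
    constructor <;> linarith

/-- For `p0 + p1 = 1`, `β = α < 1/2`, `u = ln ((1 − β)/α)`, `l = ln (β/(1 − α))` and
`ln ((1 − α)/α) > ln (p1/p0)`, there exist adjacent `{0,1}`-valued data streams `x, x'`
such that the SPRT stopping step is finite on `x` (some `n ≥ 1` has `Λ_n(x) ∉ (l, u)`)
but infinite on `x'` (`Λ_n(x') ∈ (l, u)` for all `n ≥ 1`). -/
theorem sprt_stopping_unbounded_sensitivity (p0 p1 α : ℝ)
    (hp0 : 0 < p0) (hp01 : p0 < p1) (hp1 : p1 < 1) (hsum : p0 + p1 = 1)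
    (hα0 : 0 < α) (hα1 : α < 1 / 2)
    (hbig : Real.log ((1 - α) / α) > Real.log (p1 / p0)) :
    ∃ x x' : ℕ → ℝ,
      (∀ i, x i = 0 ∨ x i = 1) ∧ (∀ i, x' i = 0 ∨ x' i = 1) ∧
      (∃ K : ℕ, ∀ n, n ≠ K → x n = x' n) ∧
      (∃ n, 1 ≤ n ∧
        sprtLLR p0 p1 x n ∉ Set.Ioo (Real.log (α / (1 - α))) (Real.log ((1 - α) / α))) ∧
      (∀ n, 1 ≤ n →
        sprtLLR p0 p1 x' n ∈ Set.Ioo (Real.log (α / (1 - α))) (Real.log ((1 - α) / α))) :=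
  sprt_stopping_unbounded_sensitivity_general p0 p1 α hp0 hp01 hsum hbig
end

section
/- Let 0 < p0 < p1 < 1 with p0 + p1 = 1, let 0 < α < 1/2, set β = α, u = ln((1−β)/α), l = ln(β/(1−α)), and assume ln((1−α)/α) > ln(p1/p0). Then for every ε ≥ 0 and every δ ∈ [0,1), the SPRT is not (ε,δ)-strongly differentially private with respect to the observation of its stopping step: there exist adjacent sequences x, x' : ℕ → {0,1} and K ∈ ℕ such that 𝟙[τ(x) = K] > e^ε · 𝟙[τ(x') = K] + δ, where τ is the SPRT stopping step. -/
open scoped Classical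

/-- The SPRT with continuation region `(l, u)` stops exactly at step `K ≥ 1` on the data
stream `x`: the log-likelihood ratio leaves `(l, u)` at step `K` and lies in `(l, u)` at
all earlier steps `1 ≤ m < K`. -/
def sprtStopsAt (p0 p1 l u : ℝ) (x : ℕ → ℝ) (K : ℕ) : Prop :=
  1 ≤ K ∧ sprtLLR p0 p1 x K ∉ Set.Ioo l u ∧
    ∀ m, 1 ≤ m → m < K → sprtLLR p0 p1 x m ∈ Set.Ioo l u

/-- For `p0 + p1 = 1`, `β = α < 1/2`, `u = ln ((1 − β)/α)`, `l = ln (β/(1 − α))` and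
`ln ((1 − α)/α) > ln (p1/p0)`, the SPRT is not `(ε, δ)`-strongly differentially private
with respect to the observation of its stopping step, for any `ε ≥ 0` and `δ ∈ [0, 1)`:
there are adjacent `{0,1}`-valued data streams `x, x'` and a step `K` with
`𝟙[τ(x) = K] > e^ε · 𝟙[τ(x') = K] + δ`. -/
theorem sprt_not_strongly_dp (p0 p1 α : ℝ)
    (hp0 : 0 < p0) (hp01 : p0 < p1) (hp1 : p1 < 1) (hsum : p0 + p1 = 1)
    (hα0 : 0 < α) (hα1 : α < 1 / 2)
    (hbig : Real.log ((1 - α) / α) > Real.log (p1 / p0))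
    (ε δ : ℝ) (hε : 0 ≤ ε) (hδ0 : 0 ≤ δ) (hδ1 : δ < 1) :
    ∃ x x' : ℕ → ℝ,
      (∀ i, x i = 0 ∨ x i = 1) ∧ (∀ i, x' i = 0 ∨ x' i = 1) ∧
      (∃ J : ℕ, ∀ n, n ≠ J → x n = x' n) ∧
      ∃ K : ℕ,
        (if sprtStopsAt p0 p1 (Real.log (α / (1 - α))) (Real.log ((1 - α) / α)) x K
          then (1 : ℝ) else 0) >
        Real.exp ε *
          (if sprtStopsAt p0 p1 (Real.log (α / (1 - α))) (Real.log ((1 - α) / α)) x' K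
            then (1 : ℝ) else 0) + δ := by
  set c := Real.log (p1 / p0) with hc
  set u := Real.log ((1 - α) / α) with hu
  have hc0 : 0 < c := Real.log_pos (by rw [lt_div_iff₀ hp0]; linarith)
  have hu0 : 0 < u := Real.log_pos (by rw [lt_div_iff₀ hα0]; linarith)
  have hl : Real.log (α / (1 - α)) = -u := by
    rw [hu, ← Real.log_inv]; congr 1; rw [inv_div]
  have huc : c < u := hbig
  set x : ℕ → ℝ := fun _ => 1 with hx
  set x' : ℕ → ℝ := fun i => if i = 1 then 0 else 1 with hx'
  have hLx : ∀ n : ℕ, sprtLLR p0 p1 x n = n * c := by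
    intro n
    unfold sprtLLR
    simp only [hx, Real.rpow_one, sub_self, Real.rpow_zero, mul_one,
      Finset.sum_const, Nat.card_Icc, Nat.add_sub_cancel, nsmul_eq_mul, hc]
  have hterm : ∀ i : ℕ,
      Real.log ((p1 ^ (x' i) * (1 - p1) ^ (1 - x' i)) /
        (p0 ^ (x' i) * (1 - p0) ^ (1 - x' i))) = c + (if i = 1 then -(2*c) else 0) := by
    intro i
    by_cases h : i = 1
    · have h1 : 1 - p1 = p0 := by linarith
      have h2 : 1 - p0 = p1 := by linarith
      simp only [hx', h, if_pos, sub_zero, Real.rpow_zero, Real.rpow_one, one_mul, h1, h2]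
      have hneg : Real.log (p0 / p1) = -c := by rw [hc, ← Real.log_inv, inv_div]
      rw [hneg]; ring
    · simp only [hx', h, if_neg, ite_false, Real.rpow_one, sub_self, Real.rpow_zero,
        mul_one, add_zero, hc]
  have hLx' : ∀ n : ℕ, 1 ≤ n → sprtLLR p0 p1 x' n = n * c - 2 * c := by
    intro n hn
    unfold sprtLLR
    simp only [hterm, Finset.sum_add_distrib, Finset.sum_const, Nat.card_Icc,
      Nat.add_sub_cancel, nsmul_eq_mul, Finset.sum_ite_eq' (Finset.Icc 1 n) 1
        (fun _ => -(2*c))]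
    rw [if_pos (Finset.mem_Icc.2 ⟨le_refl 1, hn⟩)]
    ring
  refine ⟨x, x', fun i => Or.inr rfl,
    fun i => by by_cases h : i = 1 <;> simp [hx', h], ⟨1, fun n hn => by simp [hx, hx', hn]⟩, ?_⟩
  set K := ⌈u / c⌉₊ with hK
  have hK2 : 2 ≤ K := by
    have h1 : (1 : ℝ) < u / c := (one_lt_div hc0).2 huc
    have := Nat.lt_ceil.2 (by exact_mod_cast h1 : ((1:ℕ):ℝ) < u / c)
    omega
  have hKc : u ≤ (K : ℝ) * c := by
    have := Nat.le_ceil (u / c)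
    calc u = (u / c) * c := by field_simp
    _ ≤ (K : ℝ) * c := by
      apply mul_le_mul_of_nonneg_right this hc0.le
  have hstop : sprtStopsAt p0 p1 (Real.log (α / (1 - α))) u x K := by
    refine ⟨by omega, ?_, ?_⟩
    · rw [hLx, hl]
      intro hmem
      exact absurd hmem.2 (not_lt.2 hKc)
    · intro m h1m hmK
      rw [hLx, hl]
      have hm0 : (0:ℝ) < (m:ℝ) * c := by
        have : (0:ℝ) < (m:ℝ) := by exact_mod_cast h1m
        positivity
      constructor
      · linarith
      · have hmu : ((m:ℕ):ℝ) < u / c := Nat.lt_ceil.1 hmK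
        have h5 := mul_lt_mul_of_pos_right hmu hc0
        rwa [div_mul_cancel₀ u hc0.ne'] at h5
  have hnostop : ¬ sprtStopsAt p0 p1 (Real.log (α / (1 - α))) u x' K := by
    intro h
    apply h.2.1
    rw [hLx' K (by omega), hl]
    have hlt : K - 1 < ⌈u / c⌉₊ := by rw [← hK]; omega
    have h1 : ((K - 1 : ℕ):ℝ) < u / c := Nat.lt_ceil.1 hlt
    have h2 : ((K:ℝ) - 1) < u / c := by
      rwa [Nat.cast_sub (by omega : 1 ≤ K), Nat.cast_one] at h1
    have h3 : ((K:ℝ) - 1) * c < u := by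
      have h5 := mul_lt_mul_of_pos_right h2 hc0
      rwa [div_mul_cancel₀ u hc0.ne'] at h5
    have hK2' : (2:ℝ) ≤ (K:ℝ) := by exact_mod_cast hK2
    constructor
    · nlinarith
    · nlinarith
  refine ⟨K, ?_⟩
  rw [if_pos hstop, if_neg hnostop]
  simpa using hδ1
end

section
/- Let 0 < p0 < p1 < 1, let p ∈ (0,1), and let X_1, X_2, … be i.i.d. Bernoulli(p) random variables. Then for any real numbers l < 0 < u, the SPRT stopping step is almost surely finite: with probability 1 there exists n ≥ 1 such that Λ_n(X) ∉ (l, u). -/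
open MeasureTheory ProbabilityTheory

/-! Almost surely some block of `k` consecutive observations are all equal to `1`: the blocks
`(jk, jk + k]` are disjoint, hence independent, and each has the same positive probability, so
the second Borel–Cantelli lemma applies. On such a block `Λ` increases by `k log (p1 / p0)`,
which exceeds the width `u - l` once `k` is large, so `Λ` cannot stay in `(l, u)` at both
ends of the block. -/

open Filter Function

namespace ProbabilityTheory

variable {Ω : Type*} [MeasurableSpace Ω] {μ : Measure Ω}

lemma iIndepFun.iIndepSet_preimage {β : Type*} [MeasurableSpace β] {X : ℕ → Ω → β}
    (hX : ∀ i, Measurable (X i)) (h : iIndepFun X μ) {s : Set β} (hs : MeasurableSet s) :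
    iIndepSet (fun i => X i ⁻¹' s) μ :=
  (iIndepSet_iff_meas_biInter fun i => hX i hs).2 fun _ =>
    h.meas_biInter fun _ _ => ⟨s, hs, rfl⟩

lemma iIndepSet.biInter_of_pairwise_disjoint {ι κ : Type*} {B : ι → Set Ω}
    (hBm : ∀ i, MeasurableSet (B i)) (hB : iIndepSet B μ) {S : κ → Finset ι}
    (hS : Pairwise (Disjoint on S)) :
    iIndepSet (fun j => ⋂ i ∈ S j, B i) μ := by
  classical
  refine (iIndepSet_iff_meas_biInter
    fun j => Finset.measurableSet_biInter _ fun i _ => hBm i).2 fun T => ?_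
  rw [← Finset.set_biInter_biUnion, hB.meas_biInter,
    Finset.prod_biUnion fun j _ j' _ hjj' => hS hjj']
  exact Finset.prod_congr rfl fun j _ => (hB.meas_biInter (S j)).symm

lemma pairwise_disjoint_Ioc_mul_add (k : ℕ) :
    Pairwise (Disjoint on fun j : ℕ => Finset.Ioc (j * k) (j * k + k)) :=
  (pairwise_disjoint_on _).2 fun _ _ hjj' =>
    Finset.Ioc_disjoint_Ioc_of_le (by nlinarith)

lemma ae_frequently_forall_mem_Ioc_block {B : ℕ → Set Ω} (hBm : ∀ i, MeasurableSet (B i))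
    (hB : iIndepSet B μ) {q : ENNReal} (hBq : ∀ i, μ (B i) = q) (hq : q ≠ 0) (k : ℕ) :
    ∀ᵐ ω ∂μ, ∃ᶠ j in atTop, ∀ i ∈ Finset.Ioc (j * k) (j * k + k), ω ∈ B i := by
  have := hB.isProbabilityMeasure
  set A : ℕ → Set Ω := fun j => ⋂ i ∈ Finset.Ioc (j * k) (j * k + k), B i
  have hAm : ∀ j, MeasurableSet (A j) :=
    fun j => Finset.measurableSet_biInter _ fun i _ => hBm i
  have hA : iIndepSet A μ := hB.biInter_of_pairwise_disjoint hBm (pairwise_disjoint_Ioc_mul_add k)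
  have hAq : ∀ j, μ (A j) = q ^ k := fun j => by
    simp only [A, hB.meas_biInter, hBq, Finset.prod_const, Nat.card_Ioc, Nat.add_sub_cancel_left]
  have hlimsup : μ (limsup A atTop) = 1 :=
    measure_limsup_eq_one hAm hA (by simp [hAq, hq])
  have hae : ∀ᵐ ω ∂μ, ω ∈ limsup A atTop :=
    (ae_iff_measure_eq (MeasurableSet.measurableSet_limsup hAm).nullMeasurableSet).2
      (hlimsup.trans measure_univ.symm)
  filter_upwards [hae] with ω hω
  simpa [A, mem_limsup_iff_frequently_mem] using hω

end ProbabilityTheory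

lemma sprtLLR_add_of_forall_eq_one (p0 p1 : ℝ) {x : ℕ → ℝ} {m k : ℕ}
    (hx : ∀ i ∈ Finset.Ioc m (m + k), x i = 1) :
    sprtLLR p0 p1 x (m + k) = sprtLLR p0 p1 x m + k * Real.log (p1 / p0) := by
  have hIcc : ∀ n : ℕ, Finset.Icc 1 n = Finset.Ioc 0 n := fun n => rfl
  rw [sprtLLR, sprtLLR, hIcc, hIcc,
    ← Finset.sum_Ioc_consecutive _ (Nat.zero_le m) (Nat.le_add_right m k)]
  congr 1
  rw [Finset.sum_congr rfl fun i hi => by rw [hx i hi]]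
  simp

lemma sprtLLR_notMem_Ioo_of_forall_eq_one {p0 p1 l u : ℝ} {x : ℕ → ℝ} {m k : ℕ}
    (hx : ∀ i ∈ Finset.Ioc m (m + k), x i = 1) (hk : u - l ≤ k * Real.log (p1 / p0)) :
    sprtLLR p0 p1 x m ∉ Set.Ioo l u ∨ sprtLLR p0 p1 x (m + k) ∉ Set.Ioo l u := by
  rw [sprtLLR_add_of_forall_eq_one p0 p1 hx, or_iff_not_imp_left, not_not]
  rintro ⟨hl, -⟩ ⟨-, hu⟩
  linarith

theorem sprt_stops_almost_surely_general (p0 p1 p : ℝ)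
    (hp0 : 0 < p0) (hp01 : p0 < p1) (hp : 0 < p)
    {Ω : Type*} [MeasurableSpace Ω] (μ : Measure Ω)
    (X : ℕ → Ω → ℝ) (hXmeas : ∀ i, Measurable (X i))
    (hindep : iIndepFun X μ)
    (hlaw : ∀ i, Measure.map (X i) μ =
      ENNReal.ofReal p • Measure.dirac (1 : ℝ) +
        ENNReal.ofReal (1 - p) • Measure.dirac (0 : ℝ))
    (l u : ℝ) :
    ∀ᵐ ω ∂μ, ∃ n, 1 ≤ n ∧ sprtLLR p0 p1 (fun i => X i ω) n ∉ Set.Ioo l u := by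
  have hlog : 0 < Real.log (p1 / p0) := Real.log_pos ((one_lt_div hp0).2 hp01)
  obtain ⟨k, hk⟩ := exists_nat_ge ((u - l) / Real.log (p1 / p0))
  have hwidth : u - l ≤ (k + 1 : ℕ) * Real.log (p1 / p0) := by
    rw [← div_le_iff₀ hlog]
    push_cast
    linarith
  have hone : ∀ i, μ (X i ⁻¹' {1}) = ENNReal.ofReal p := fun i => by
    rw [← Measure.map_apply (hXmeas i) (measurableSet_singleton 1), hlaw i]
    simp
  filter_upwards [ae_frequently_forall_mem_Ioc_block (fun i => hXmeas i (measurableSet_singleton 1))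
    (hindep.iIndepSet_preimage hXmeas (measurableSet_singleton 1)) hone
    (ENNReal.ofReal_pos.2 hp).ne' (k + 1)] with ω hω
  obtain ⟨j, hblock, hj⟩ := (hω.and_eventually (eventually_ge_atTop 1)).exists
  have hpos : 1 ≤ j * (k + 1) := Nat.one_le_iff_ne_zero.2 (by positivity)
  rcases sprtLLR_notMem_Ioo_of_forall_eq_one (p0 := p0) (x := fun i => X i ω) hblock hwidth with
    h | h
  · exact ⟨_, hpos, h⟩
  · exact ⟨_, hpos.trans (Nat.le_add_right _ _), h⟩

/-- If `X_1, X_2, …` are i.i.d. Bernoulli(`p`) random variables with `p ∈ (0, 1)`, then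
for any reals `l < 0 < u` the SPRT stopping step is almost surely finite: with
probability one there is some `n ≥ 1` with `Λ_n(X) ∉ (l, u)`. -/
theorem sprt_stops_almost_surely (p0 p1 p : ℝ)
    (hp0 : 0 < p0) (hp01 : p0 < p1) (hp1 : p1 < 1) (hp : 0 < p) (hp' : p < 1)
    {Ω : Type*} [MeasurableSpace Ω] (μ : Measure Ω) [IsProbabilityMeasure μ]
    (X : ℕ → Ω → ℝ) (hXmeas : ∀ i, Measurable (X i))
    (hindep : iIndepFun X μ)
    (hlaw : ∀ i, Measure.map (X i) μ =
      ENNReal.ofReal p • Measure.dirac (1 : ℝ) +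
        ENNReal.ofReal (1 - p) • Measure.dirac (0 : ℝ))
    (l u : ℝ) (hl : l < 0) (hu : 0 < u) :
    ∀ᵐ ω ∂μ, ∃ n, 1 ≤ n ∧ sprtLLR p0 p1 (fun i => X i ω) n ∉ Set.Ioo l u :=
  sprt_stops_almost_surely_general p0 p1 p hp0 hp01 hp μ X hXmeas hindep hlaw l u
end

section
/- Let d > 0, ε > 0, D ∈ ℕ with d ≥ D/ε, and let N be a ℤ-valued random variable with the discrete Laplace distribution of parameter d, i.e., ℙ[N = k] = C_d · e^{−|k|/d} with C_d = (e^{1/d} − 1)/(e^{1/d} + 1). Then for all integers t, t' with |t − t'| ≤ D and every set S ⊆ ℤ, ℙ[t + N ∈ S] ≤ e^ε · ℙ[t' + N ∈ S]; that is, releasing an integer statistic of sensitivity at most D with added discrete Laplace noise of parameter d achieves ε-differential privacy. -/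
/-!
Moving the centre of the noise from `t'` to `t` multiplies the mass at `k` by
`e^{(|k - t'| - |k - t|)/d} ≤ e^{|t - t'|/d} ≤ e^{D/d} ≤ e^ε` (triangle inequality), and
summing this pointwise bound over the countable set `S` gives the inequality of probabilities.
-/

open MeasureTheory

/-- The probability mass function of the discrete Laplace distribution on `ℤ` with
parameter `d > 0`: `f_d(k) = C_d · e^{−|k|/d}` with `C_d = (e^{1/d} − 1)/(e^{1/d} + 1)`. -/
noncomputable def discreteLaplacePMF (d : ℝ) (k : ℤ) : ℝ :=
  (Real.exp (1 / d) - 1) / (Real.exp (1 / d) + 1) * Real.exp (-(|k| : ℝ) / d)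

theorem measure_preimage_le_mul_of_forall_singleton {Ω α : Type*} [MeasurableSpace Ω]
    [MeasurableSpace α] [Countable α] [MeasurableSingletonClass α] {μ : Measure Ω}
    {X Y : Ω → α} (hX : Measurable X) (hY : Measurable Y) (c : ENNReal)
    (h : ∀ a, μ (X ⁻¹' {a}) ≤ c * μ (Y ⁻¹' {a})) (S : Set α) :
    μ (X ⁻¹' S) ≤ c * μ (Y ⁻¹' S) := by
  rw [← tsum_measure_preimage_singleton S.to_countable fun a _ => hX (measurableSet_singleton a),
    ← tsum_measure_preimage_singleton S.to_countable fun a _ => hY (measurableSet_singleton a),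
    ← ENNReal.tsum_mul_left]
  exact ENNReal.tsum_le_tsum fun a => h a

section DiscreteLaplace

variable {d : ℝ}

theorem discreteLaplacePMF_nonneg (hd : 0 ≤ d) (k : ℤ) : 0 ≤ discreteLaplacePMF d k := by
  unfold discreteLaplacePMF
  have h : 1 ≤ Real.exp (1 / d) := Real.one_le_exp (by positivity)
  have hC : 0 ≤ (Real.exp (1 / d) - 1) / (Real.exp (1 / d) + 1) :=
    div_nonneg (by linarith) (by positivity)
  positivity

theorem discreteLaplacePMF_eq_exp_mul (k j : ℤ) :
    discreteLaplacePMF d k = Real.exp ((|(j : ℝ)| - |(k : ℝ)|) / d) * discreteLaplacePMF d j := by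
  unfold discreteLaplacePMF
  rw [mul_left_comm, ← Real.exp_add]
  congr 2
  ring

theorem discreteLaplacePMF_le_exp_mul (hd : 0 ≤ d) (k j : ℤ) :
    discreteLaplacePMF d k ≤ Real.exp (|k - j| / d) * discreteLaplacePMF d j := by
  rw [discreteLaplacePMF_eq_exp_mul k j]
  gcongr
  · exact discreteLaplacePMF_nonneg hd j
  push_cast
  exact (abs_sub_abs_le_abs_sub _ _).trans_eq (abs_sub_comm _ _)

end DiscreteLaplace

theorem discreteLaplace_mechanism_dp_general {Ω : Type*} [MeasurableSpace Ω]
    (μ : Measure Ω)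
    (d ε : ℝ) (D : ℕ) (hε : 0 < ε) (hdD : d ≥ (D : ℝ) / ε)
    (N : Ω → ℤ) (hN : Measurable N)
    (hlaw : ∀ k : ℤ, μ {ω | N ω = k} = ENNReal.ofReal (discreteLaplacePMF d k))
    (t t' : ℤ) (htt' : |t - t'| ≤ (D : ℤ)) (S : Set ℤ) :
    μ {ω | t + N ω ∈ S} ≤ ENNReal.ofReal (Real.exp ε) * μ {ω | t' + N ω ∈ S} := by
  have hd : 0 ≤ d := (div_nonneg D.cast_nonneg hε.le).trans hdD
  have hDd : (D : ℝ) / d ≤ ε :=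
    div_le_of_le_mul₀ hd hε.le (by rwa [ge_iff_le, div_le_iff₀ hε, mul_comm] at hdD)
  have hshift : ∀ s k : ℤ, (fun ω => s + N ω) ⁻¹' {k} = {ω | N ω = k - s} := by
    intro s k; ext ω; simp [eq_sub_iff_add_eq']
  refine measure_preimage_le_mul_of_forall_singleton (hN.const_add t) (hN.const_add t') _
    (fun k => ?_) S
  rw [hshift, hshift, hlaw, hlaw, ← ENNReal.ofReal_mul (Real.exp_pos ε).le]
  gcongr
  calc discreteLaplacePMF d (k - t)
      ≤ Real.exp (|k - t - (k - t')| / d) * discreteLaplacePMF d (k - t') :=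
        discreteLaplacePMF_le_exp_mul hd _ _
    _ ≤ Real.exp ε * discreteLaplacePMF d (k - t') := by
        gcongr
        · exact discreteLaplacePMF_nonneg hd _
        calc ((|k - t - (k - t')| : ℤ) : ℝ) / d = |t - t'| / d := by
              rw [sub_sub_sub_cancel_left, abs_sub_comm]
          _ ≤ D / d := by gcongr; exact_mod_cast htt'
          _ ≤ ε := hDd

/-- Adding discrete Laplace noise of parameter `d ≥ D/ε` to an integer statistic of
sensitivity at most `D` achieves `ε`-differential privacy: for all integers `t, t'` with
`|t − t'| ≤ D` and every set `S ⊆ ℤ`, `ℙ[t + N ∈ S] ≤ e^ε · ℙ[t' + N ∈ S]`. -/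
theorem discreteLaplace_mechanism_dp {Ω : Type*} [MeasurableSpace Ω]
    (μ : Measure Ω) [IsProbabilityMeasure μ]
    (d ε : ℝ) (D : ℕ) (hd : 0 < d) (hε : 0 < ε) (hdD : d ≥ (D : ℝ) / ε)
    (N : Ω → ℤ) (hN : Measurable N)
    (hlaw : ∀ k : ℤ, μ {ω | N ω = k} = ENNReal.ofReal (discreteLaplacePMF d k))
    (t t' : ℤ) (htt' : |t - t'| ≤ (D : ℤ)) (S : Set ℤ) :
    μ {ω | t + N ω ∈ S} ≤ ENNReal.ofReal (Real.exp ε) * μ {ω | t' + N ω ∈ S} :=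
  discreteLaplace_mechanism_dp_general μ d ε D hε hdD N hN hlaw t t' htt' S
end
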